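/- Let a be a signed digit expansion of x ∈ ℝ and k ∈ ℕ be such that for every n > k not both a n and a (n+1) are nonzero. Then every x' ∈ ℝ with |x - x'| ≤ 2^(-k)/3 admits a signed digit expansion b with b n = a n for all n ≤ k. -/

import Mathlib

/-!
Split `x` into its head `∑_{n ≤ k} a n 2^(-n)` and its tail `t`. With `v j = |a (k + 1 + j)|`,
shifting the index doubles the weights, so `3 ∑ v j / 2^(j+1) = v 0 + ∑ (v j + v (j+1)) / 2^(j+1)`;
non-adjacency makes this at most `2`, i.e. `|t| ≤ 2/3 · 2^(-k)`. Hence `r = x' - head` satisfies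
`|r| ≤ 2^(-k)`, so `r` has a signed binary expansion with digits beyond position `k`, and appending
it to the head gives the expansion of `x'`.
-/

def IsSignedDigitExpansion (a : ℤ → ℤ) (x : ℝ) : Prop :=
  (∀ n : ℤ, a n = -1 ∨ a n = 0 ∨ a n = 1) ∧
  (∃ N : ℕ, ∀ n : ℤ, n ≤ -(N : ℤ) → a n = 0) ∧
  Summable (fun n : ℤ => (a n : ℝ) * (2 : ℝ) ^ (-n)) ∧
  x = ∑' n : ℤ, (a n : ℝ) * (2 : ℝ) ^ (-n)

lemma isSignedDigitExpansion_iff {a : ℤ → ℤ} {x : ℝ} : IsSignedDigitExpansion a x ↔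
    (∀ n, a n = -1 ∨ a n = 0 ∨ a n = 1) ∧ (∃ N : ℕ, ∀ n : ℤ, n ≤ -(N : ℤ) → a n = 0) ∧
      HasSum (fun n => (a n : ℝ) * 2 ^ (-n)) x := by
  refine ⟨fun ⟨hdig, hlow, hs, hx⟩ => ⟨hdig, hlow, hx ▸ hs.hasSum⟩,
    fun ⟨hdig, hlow, hx⟩ => ⟨hdig, hlow, hx.summable, hx.tsum_eq.symm⟩⟩

lemma summable_div_two_pow_succ {v : ℕ → ℝ} (hv : ∀ j, |v j| ≤ 1) :
    Summable fun j => v j / 2 ^ (j + 1) := by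
  refine (hasSum_geometric_two' 1).summable.of_norm_bounded fun j => ?_
  rw [norm_div, norm_pow, Real.norm_ofNat, Real.norm_eq_abs, pow_succ, div_div, mul_comm]
  gcongr
  exact hv j

lemma tsum_div_two_pow_succ_le_two_thirds {v : ℕ → ℝ} (hv0 : ∀ j, 0 ≤ v j)
    (hv : ∀ j, v j + v (j + 1) ≤ 1) : ∑' j, v j / 2 ^ (j + 1) ≤ 2 / 3 := by
  have hv1 (j : ℕ) : |v j| ≤ 1 := by
    rw [abs_of_nonneg (hv0 j)]; linarith [hv j, hv0 (j + 1)]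
  have hs := summable_div_two_pow_succ hv1
  have hs' := summable_div_two_pow_succ fun j => hv1 (j + 1)
  have hshift : ∑' j, v j / 2 ^ (j + 1) = v 0 / 2 + (∑' j, v (j + 1) / 2 ^ (j + 1)) / 2 := by
    rw [hs.tsum_eq_zero_add, ← tsum_div_const]
    simp only [div_div, ← pow_succ, zero_add, pow_one]
  have hpair : ∑' j, v j / 2 ^ (j + 1) + ∑' j, v (j + 1) / 2 ^ (j + 1) ≤ 1 := by
    rw [← hs.tsum_add hs', ← tsum_geometric_two' 1]
    refine (hs.add hs').tsum_le_tsum (fun j => ?_) (hasSum_geometric_two' 1).summable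
    rw [← add_div, div_div, ← pow_succ']
    gcongr
    exact hv j
  linarith [hv 0, hv0 1]

lemma hasSum_int_iff_nat_of_eq_zero_of_le {M : Type*} [AddCommMonoid M] [TopologicalSpace M]
    {f : ℤ → M} {k : ℤ} (hf : ∀ n ≤ k, f n = 0) {s : M} :
    HasSum f s ↔ HasSum (fun j : ℕ => f (k + 1 + j)) s := by
  refine (Function.Injective.hasSum_iff (g := fun j : ℕ => k + 1 + j)
    (fun i j h => by simpa using h) fun n hn => hf n ?_).symm
  by_contra! h
  exact hn ⟨(n - k - 1).toNat, by simp only; omega⟩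

lemma two_zpow_neg_add_one_add (k : ℤ) (j : ℕ) :
    (2 : ℝ) ^ (-(k + 1 + j)) = 2 ^ (-k) / 2 ^ (j + 1) := by
  rw [show -(k + 1 + j) = -k - ((j + 1 : ℕ) : ℤ) by push_cast; ring, zpow_sub₀ two_ne_zero,
    zpow_natCast]

lemma abs_le_of_hasSum_of_nonadjacent {c : ℤ → ℝ} {k : ℤ} {t : ℝ} (hc : ∀ n, |c n| ≤ 1)
    (hck : ∀ n ≤ k, c n = 0) (hadj : ∀ n, c n = 0 ∨ c (n + 1) = 0)
    (ht : HasSum (fun n => c n * 2 ^ (-n)) t) : |t| ≤ 2 / 3 * 2 ^ (-k) := by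
  set v : ℕ → ℝ := fun j => |c (k + 1 + j)|
  have hv (j : ℕ) : v j + v (j + 1) ≤ 1 := by
    have hnext : k + 1 + ↑(j + 1) = k + 1 + j + 1 := by push_cast; ring
    rcases hadj (k + 1 + j) with h | h <;> simp only [v, hnext, h, abs_zero]
    exacts [by linarith [hc (k + 1 + j + 1)], by linarith [hc (k + 1 + j)]]
  have hv1 (j : ℕ) : |v j| ≤ 1 := by simpa [v] using hc (k + 1 + j)
  rw [hasSum_int_iff_nat_of_eq_zero_of_le (k := k) fun n hn => by simp [hck n hn]] at ht
  calc |t| ≤ 2 ^ (-k) * ∑' j, v j / 2 ^ (j + 1) := by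
        refine ht.norm_le_of_bounded ((summable_div_two_pow_succ hv1).hasSum.mul_left _) fun j => ?_
        rw [Real.norm_eq_abs, abs_mul, two_zpow_neg_add_one_add,
          abs_of_pos (a := 2 ^ (-k) / 2 ^ (j + 1)) (by positivity)]
        exact (mul_div_left_comm _ _ _).le
    _ ≤ 2 ^ (-k) * (2 / 3) := by
        gcongr
        exact tsum_div_two_pow_succ_le_two_thirds (fun j => abs_nonneg _) hv
    _ = 2 / 3 * 2 ^ (-k) := mul_comm _ _

lemma exists_signedDigits_hasSum_of_abs_le {k : ℤ} {r : ℝ} (hr : |r| ≤ 2 ^ (-k)) :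
    ∃ c : ℤ → ℤ, (∀ n, c n = -1 ∨ c n = 0 ∨ c n = 1) ∧ (∀ n ≤ k, c n = 0) ∧
      HasSum (fun n => (c n : ℝ) * 2 ^ (-n)) r := by
  have hpow : (0 : ℝ) < 2 ^ (-k) := by positivity
  obtain ⟨d, -, hd⟩ := Real.ofDigits_SurjOn (b := 2) one_lt_two
    (show |r| / 2 ^ (-k) ∈ Set.Icc 0 1 from
      ⟨by positivity, (div_le_one hpow).mpr hr⟩)
  obtain ⟨σ, hσ, hrσ⟩ : ∃ σ : ℤ, (σ = -1 ∨ σ = 1) ∧ r = σ * |r| := by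
    rcases le_or_gt 0 r with h | h
    · exact ⟨1, Or.inr rfl, by simp [abs_of_nonneg h]⟩
    · exact ⟨-1, Or.inl rfl, by simp [abs_of_neg h]⟩
  set c : ℤ → ℤ := fun n => if n ≤ k then 0 else σ * (d (n - (k + 1)).toNat : ℕ)
  have hc0 (n : ℤ) (hn : n ≤ k) : c n = 0 := if_pos hn
  refine ⟨c, fun n => ?_, hc0, ?_⟩
  · have := (d (n - (k + 1)).toNat).isLt
    simp only [c]
    split_ifs <;> rcases hσ with rfl | rfl <;> omega
  · have hsum := (Real.summable_ofDigitsTerm (digits := d)).hasSum.mul_left ((σ : ℝ) * 2 ^ (-k))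
    change HasSum _ (σ * 2 ^ (-k) * Real.ofDigits d) at hsum
    rw [hd, mul_assoc, mul_div_cancel₀ _ hpow.ne', ← hrσ] at hsum
    rw [hasSum_int_iff_nat_of_eq_zero_of_le (k := k) fun n hn => by simp [hc0 n hn]]
    convert hsum using 2 with j
    have hj : ¬k + 1 + j ≤ k := by omega
    have hjk : (k + 1 + j - (k + 1)).toNat = j := by omega
    simp only [c, if_neg hj, hjk, Real.ofDigitsTerm, two_zpow_neg_add_one_add]
    push_cast
    ring

lemma IsSignedDigitExpansion.exists_hasSum_tail_abs_le {a : ℤ → ℤ} {x : ℝ} {k : ℤ}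
    (ha : IsSignedDigitExpansion a x) (hna : ∀ n, k < n → a n = 0 ∨ a (n + 1) = 0) :
    ∃ t : ℝ, HasSum (fun n => (if n ≤ k then 0 else a n : ℝ) * 2 ^ (-n)) t ∧
      |t| ≤ 2 / 3 * 2 ^ (-k) := by
  obtain ⟨hdig, -, hx⟩ := isSignedDigitExpansion_iff.mp ha
  set tail : ℤ → ℝ := fun n => if n ≤ k then 0 else a n
  have htail : Summable fun n => tail n * 2 ^ (-n) := by
    refine Summable.of_norm_bounded (summable_abs_iff.mpr hx.summable) fun n => ?_
    by_cases h : n ≤ k <;> simp [tail, h]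
    positivity
  refine ⟨_, htail.hasSum, abs_le_of_hasSum_of_nonadjacent (fun n => ?_) (fun n h => if_pos h)
    (fun n => ?_) htail.hasSum⟩
  · by_cases h : n ≤ k <;> simp only [h, if_true, if_false, abs_zero, zero_le_one]
    rcases hdig n with h | h | h <;> simp [h]
  · by_cases h : n ≤ k
    · exact .inl (if_pos h)
    · rcases hna n (by omega) with h' | h' <;> simp [h, h']

theorem signedDigit_perturbation (a : ℤ → ℤ) (x : ℝ) (k : ℕ)
    (ha : IsSignedDigitExpansion a x)
    (hna : ∀ n : ℤ, (k : ℤ) < n → a n = 0 ∨ a (n + 1) = 0) :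
    ∀ x' : ℝ, |x - x'| ≤ (2 : ℝ) ^ (-(k : ℤ)) / 3 →
      ∃ b : ℤ → ℤ, IsSignedDigitExpansion b x' ∧ ∀ n : ℤ, n ≤ (k : ℤ) → b n = a n := by
  intro x' hx'
  obtain ⟨hdig, ⟨N, hN⟩, hx⟩ := isSignedDigitExpansion_iff.mp ha
  obtain ⟨t, htail, ht⟩ := ha.exists_hasSum_tail_abs_le hna
  obtain ⟨c, hc, hck, hcsum⟩ := exists_signedDigits_hasSum_of_abs_le (k := k) (r := x' - x + t) <|
    calc |x' - x + t| ≤ |x - x'| + |t| := abs_sub_comm x x' ▸ abs_add_le _ _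
      _ ≤ 2 ^ (-(k : ℤ)) := by linarith
  refine ⟨fun n => if n ≤ k then a n else c n, ?_, fun n hn => if_pos hn⟩
  refine isSignedDigitExpansion_iff.mpr ⟨fun n => ?_, ⟨N, fun n hn => ?_⟩, ?_⟩
  · split_ifs
    exacts [hdig n, hc n]
  · rw [if_pos (by omega)]
    exact hN n hn
  · have hsplice : (fun n : ℤ => ((if n ≤ k then a n else c n : ℤ) : ℝ) * 2 ^ (-n)) =
        fun n => (a n * 2 ^ (-n) - (if n ≤ k then 0 else a n : ℝ) * 2 ^ (-n)) +
          c n * 2 ^ (-n) := by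
      funext n
      by_cases h : n ≤ k <;> simp [h, hck]
    rw [hsplice, show x' = x - t + (x' - x + t) by ring]
    exact (hx.sub htail).add hcsum
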